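/- Let f(n, k) denote the number of words in [k]^n avoiding the generalized pattern 21-1, with the convention f(m, k) = 0 for m < 0. Then for all integers n ≥ 1 and k ≥ 1, f(n, k) = ∑_{d=1}^{k} ∑_{j=0}^{d-1} C(d-1, j) ∑_{i=0}^{d-1-j} C(d-1-j, i)·(-1)^i·f(n - 1 - i - j, k - j). -/

import Mathlib

/-!
Let `F(n, k, d)` count the avoiding words in `[k]^n` with first letter `d`. A word `d v` avoids
21-1 iff `v` does and, if `v` starts with a letter below `d`, that letter does not recur in `v`.
So `F(n, k, d + 1) = F(n, k, d) - F(n - 1, k, d) + G`, where `G` counts the avoiding words of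
length `n - 1` starting with a non-recurring `d`; deleting the value `d` from the alphabet of
their tails identifies them with the words counted by `F(n - 1, k - 1, d)`. With the shifts
`N : n ↦ n - 1` and `K : k ↦ k - 1` this reads `F(·, ·, d + 1) = (N K + (1 - N)) F(·, ·, d)`,
and `F(n, k, 1) = f(n - 1, k)`; expanding `(N K + (1 - N))^(d - 1)` twice by the binomial
theorem and summing over `d` gives the formula.
-/

/-- The `i`-th letter (1-based value in `{1,…,k}`) of a word `w ∈ [k]^n`,
with value `0` outside the word. -/
def letter {n k : ℕ} (w : Fin n → Fin k) (i : ℕ) : ℕ :=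
  if h : i < n then (w ⟨i, h⟩ : ℕ) + 1 else 0

/-- `w` avoids the generalized pattern 21-1: there are no 0-based indices
`i, j` with `i + 2 ≤ j < n` such that `w i > w (i+1)` and `w j = w (i+1)`. -/
def Avoids21d1 {n k : ℕ} (w : Fin n → Fin k) : Prop :=
  ∀ i j : ℕ, i + 2 ≤ j → j < n →
    ¬ (letter w (i + 1) < letter w i ∧ letter w j = letter w (i + 1))

/-- The number of words in `[k]^m` avoiding 21-1, as an integer,
with the convention that it is `0` for `m < 0`. -/
noncomputable def f (m : ℤ) (k : ℕ) : ℤ :=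
  if m < 0 then 0
  else (Nat.card {w : Fin m.toNat → Fin k // Avoids21d1 w} : ℤ)

open Finset

theorem card_subtype_or_add_card_subtype_and {α : Type*} [Finite α] (P Q : α → Prop) :
    Nat.card {x // P x ∨ Q x} + Nat.card {x // P x ∧ Q x} =
      Nat.card {x // P x} + Nat.card {x // Q x} :=
  Set.ncard_union_add_ncard_inter {x | P x} {x | Q x}

section Words

variable {n m k : ℕ}

lemma letter_of_lt (w : Fin n → Fin k) {i : ℕ} (h : i < n) : letter w i = w ⟨i, h⟩ + 1 :=
  dif_pos h

lemma letter_of_le (w : Fin n → Fin k) {i : ℕ} (h : n ≤ i) : letter w i = 0 :=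
  dif_neg (by omega)

@[simp]
lemma letter_cons_zero (a : Fin k) (v : Fin m → Fin k) :
    letter (Fin.cons a v : Fin (m + 1) → Fin k) 0 = a + 1 := by
  simp [letter]

@[simp]
lemma letter_cons_succ (a : Fin k) (v : Fin m → Fin k) (j : ℕ) :
    letter (Fin.cons a v : Fin (m + 1) → Fin k) (j + 1) = letter v j := by
  by_cases h : j < m
  · rw [letter_of_lt _ (by omega), letter_of_lt _ h]
    rfl
  · rw [letter_of_le _ (by omega), letter_of_le _ (by omega)]

lemma letter_lt_letter_iff (w : Fin n → Fin k) {i j : ℕ} (hi : i < n) (hj : j < n) :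
    letter w i < letter w j ↔ w ⟨i, hi⟩ < w ⟨j, hj⟩ := by
  rw [letter_of_lt w hi, letter_of_lt w hj, Fin.lt_def]
  omega

lemma letter_eq_letter_iff (w : Fin n → Fin k) {i j : ℕ} (hi : i < n) (hj : j < n) :
    letter w i = letter w j ↔ w ⟨i, hi⟩ = w ⟨j, hj⟩ := by
  rw [letter_of_lt w hi, letter_of_lt w hj, Fin.ext_iff]
  omega

def HeadRecurs (w : Fin n → Fin k) : Prop :=
  ∃ j, 1 ≤ j ∧ j < n ∧ letter w j = letter w 0

lemma HeadRecurs.letter_zero_pos {w : Fin n → Fin k} (h : HeadRecurs w) : 0 < letter w 0 := by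
  obtain ⟨j, -, hj, -⟩ := h
  rw [letter_of_lt w (by omega)]
  omega

lemma headRecurs_cons_iff (a : Fin k) (v : Fin m → Fin k) :
    HeadRecurs (Fin.cons a v : Fin (m + 1) → Fin k) ↔ a ∈ Set.range v := by
  constructor
  · rintro ⟨j, hj1, hjm, hj⟩
    obtain ⟨j, rfl⟩ : ∃ j', j = j' + 1 := ⟨j - 1, by omega⟩
    rw [letter_cons_succ, letter_cons_zero, letter_of_lt v (by omega)] at hj
    exact ⟨⟨j, by omega⟩, Fin.ext (by omega)⟩
  · rintro ⟨j, rfl⟩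
    refine ⟨j + 1, by omega, by omega, ?_⟩
    rw [letter_cons_succ, letter_cons_zero, letter_of_lt v j.isLt]

theorem avoids21d1_cons_iff (a : Fin k) (v : Fin m → Fin k) :
    Avoids21d1 (Fin.cons a v : Fin (m + 1) → Fin k) ↔
      Avoids21d1 v ∧ (letter v 0 < a + 1 → ¬ HeadRecurs v) := by
  constructor
  · intro h
    refine ⟨fun i j hij hj => by simpa using h (i + 1) (j + 1) (by omega) (by omega), ?_⟩
    rintro hlt ⟨j, hj1, hjm, hj⟩
    exact h 0 (j + 1) (by omega) (by omega) ⟨by simpa using hlt, by simpa using hj⟩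
  · rintro ⟨hv, hhead⟩ i j hij hj ⟨hdesc, heq⟩
    obtain ⟨j, rfl⟩ : ∃ j', j = j' + 1 := ⟨j - 1, by omega⟩
    cases i with
    | zero =>
      simp only [zero_add, letter_cons_zero, letter_cons_succ] at hdesc heq
      exact hhead hdesc ⟨j, by omega, by omega, heq⟩
    | succ i =>
      simp only [letter_cons_succ] at hdesc heq
      exact hv i j (by omega) (by omega) ⟨hdesc, heq⟩

theorem avoids21d1_comp_iff {k' : ℕ} {g : Fin k → Fin k'} (hg : StrictMono g) (v : Fin n → Fin k) :
    Avoids21d1 (g ∘ v) ↔ Avoids21d1 v := by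
  refine forall_congr' fun i => forall_congr' fun j => forall_congr' fun hij =>
    forall_congr' fun hj => ?_
  simp only [letter_lt_letter_iff _ (by omega : i + 1 < n) (by omega : i < n),
    letter_eq_letter_iff _ (by omega : j < n) (by omega : i + 1 < n), Function.comp_apply,
    hg.lt_iff_lt, hg.injective.eq_iff]

lemma headRecurs_comp_iff {k' : ℕ} {g : Fin k → Fin k'} (hg : Function.Injective g)
    (v : Fin n → Fin k) : HeadRecurs (g ∘ v) ↔ HeadRecurs v := by
  refine exists_congr fun j => and_congr_right fun _ => and_congr_right fun hj => ?_
  simp only [letter_eq_letter_iff _ hj (by omega : 0 < n), Function.comp_apply, hg.eq_iff]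

lemma cons_tail_of_letter_zero {a : Fin k} {w : Fin (m + 1) → Fin k} (h : letter w 0 = a + 1) :
    Fin.cons a (Fin.tail w) = w := by
  rw [letter_of_lt w (Nat.succ_pos m)] at h
  have : w 0 = a := Fin.ext (by simpa using h)
  rw [← this, Fin.cons_self_tail]

lemma card_letter_zero_eq_card_cons (a : Fin k) (P : (Fin (m + 1) → Fin k) → Prop) :
    Nat.card {w : Fin (m + 1) → Fin k // P w ∧ letter w 0 = a + 1} =
      Nat.card {v : Fin m → Fin k // P (Fin.cons a v)} :=
  Nat.card_congr
    { toFun w := ⟨Fin.tail w.1, by rw [cons_tail_of_letter_zero w.2.2]; exact w.2.1⟩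
      invFun v := ⟨Fin.cons a v.1, v.2, letter_cons_zero a v.1⟩
      left_inv w := Subtype.ext (cons_tail_of_letter_zero w.2.2)
      right_inv v := Subtype.ext (Fin.tail_cons (α := fun _ => Fin k) a v.1) }

lemma card_fin_zero_letter_zero_eq_zero {d : ℕ} (hd : d ≠ 0) (P : (Fin 0 → Fin k) → Prop) :
    Nat.card {w : Fin 0 → Fin k // P w ∧ letter w 0 = d} = 0 := by
  have : IsEmpty {w : Fin 0 → Fin k // P w ∧ letter w 0 = d} :=
    ⟨fun w => hd (by rw [← w.2.2, letter_of_le _ le_rfl])⟩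
  exact Nat.card_of_isEmpty

lemma card_castSucc_notMem_range_eq_card_comp_succAbove (p : Fin k)
    (Q : (Fin m → Fin (k + 1)) → Prop) :
    Nat.card {v : Fin m → Fin (k + 1) // Q v ∧ p.castSucc ∉ Set.range v} =
      Nat.card {u : Fin m → Fin k // Q (p.castSucc.succAbove ∘ u)} := by
  have hsucc_pred (v : Fin m → Fin (k + 1)) (hv : p.castSucc ∉ Set.range v) :
      p.castSucc.succAbove ∘ p.predAbove ∘ v = v :=
    funext fun j => Fin.succAbove_predAbove fun h => hv ⟨j, h⟩
  exact Nat.card_congr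
    { toFun v := ⟨p.predAbove ∘ v.1, by rw [hsucc_pred v.1 v.2.2]; exact v.2.1⟩
      invFun u := ⟨_ ∘ u.1, u.2, fun ⟨j, hj⟩ => Fin.succAbove_ne _ _ hj⟩
      left_inv v := Subtype.ext (hsucc_pred v.1 v.2.2)
      right_inv u := Subtype.ext (funext fun j => Fin.predAbove_succAbove p (u.1 j)) }

end Words

section Counting

variable {m k d : ℕ}

noncomputable def headCount (n k d : ℕ) : ℕ :=
  Nat.card {w : Fin n → Fin k // Avoids21d1 w ∧ letter w 0 = d}

noncomputable def loneHeadCount (n k d : ℕ) : ℕ :=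
  Nat.card {w : Fin n → Fin k // (Avoids21d1 w ∧ ¬ HeadRecurs w) ∧ letter w 0 = d}

lemma f_natCast (n k : ℕ) : f n k = Nat.card {w : Fin n → Fin k // Avoids21d1 w} := by
  simp [f]

lemma f_of_neg {n : ℤ} (h : n < 0) (k : ℕ) : f n k = 0 :=
  if_pos h

lemma card_avoids21d1_eq_sum_headCount (m k : ℕ) :
    Nat.card {w : Fin (m + 1) → Fin k // Avoids21d1 w} = ∑ d ∈ Icc 1 k, headCount (m + 1) k d := by
  classical
  have hmaps : ∀ w ∈ univ.filter (fun w : Fin (m + 1) → Fin k => Avoids21d1 w),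
      letter w 0 ∈ Icc 1 k := fun w _ => by
    rw [letter_of_lt w (Nat.succ_pos m), mem_Icc]
    exact ⟨by omega, (w _).isLt⟩
  rw [Nat.card_eq_fintype_card, Fintype.card_subtype, card_eq_sum_card_fiberwise hmaps]
  refine sum_congr rfl fun d _ => ?_
  rw [headCount, Nat.card_eq_fintype_card, Fintype.card_subtype, filter_filter]

lemma headCount_zero (hd : d ≠ 0) : headCount 0 k d = 0 :=
  card_fin_zero_letter_zero_eq_zero hd _

lemma headCount_succ (hd : 1 ≤ d) (hdk : d ≤ k) :
    headCount (m + 1) k d =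
      Nat.card {v : Fin m → Fin k // Avoids21d1 v ∧ (letter v 0 < d → ¬ HeadRecurs v)} := by
  obtain ⟨a, rfl⟩ : ∃ a : Fin k, d = a + 1 := ⟨⟨d - 1, by omega⟩, (Nat.sub_add_cancel hd).symm⟩
  rw [headCount, card_letter_zero_eq_card_cons]
  exact Nat.card_congr (Equiv.subtypeEquivRight fun v => avoids21d1_cons_iff a v)

lemma headCount_succ_one (hk : 1 ≤ k) :
    headCount (m + 1) k 1 = Nat.card {v : Fin m → Fin k // Avoids21d1 v} := by
  rw [headCount_succ le_rfl hk]
  refine Nat.card_congr (Equiv.subtypeEquivRight fun v => and_iff_left fun h hv => ?_)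
  exact absurd hv.letter_zero_pos (by omega)

/- Raising the first letter from `d` to `d + 1` only matters for words whose tail starts with
`d`, and among those it excludes exactly the ones in which `d` recurs. -/
lemma headCount_succ_add_headCount (hd : 1 ≤ d) (hdk : d + 1 ≤ k) :
    headCount (m + 1) k (d + 1) + headCount m k d =
      headCount (m + 1) k d + loneHeadCount m k d := by
  rw [headCount_succ (by omega) hdk, headCount_succ hd (by omega), headCount, loneHeadCount,
    ← card_subtype_or_add_card_subtype_and]
  congr 1 <;> refine Nat.card_congr (Equiv.subtypeEquivRight fun v => ⟨?_, ?_⟩)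
  · rintro (⟨hv, hlt⟩ | ⟨hv, h⟩)
    · exact ⟨hv, fun h => hlt (by omega)⟩
    · exact ⟨hv, fun hlt => absurd h (by omega)⟩
  · rintro ⟨hv, hlt⟩
    by_cases h : letter v 0 = d
    · exact Or.inr ⟨hv, h⟩
    · exact Or.inl ⟨hv, fun h' => hlt (by omega)⟩
  · rintro ⟨⟨hv, hlt⟩, -, h⟩
    exact ⟨⟨hv, hlt (by omega)⟩, h⟩
  · rintro ⟨⟨hv, hrec⟩, h⟩
    exact ⟨⟨hv, fun _ => hrec⟩, hv, h⟩

lemma loneHeadCount_eq_headCount (hd : 1 ≤ d) (hdk : d < k) :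
    loneHeadCount m k d = headCount m (k - 1) d := by
  cases m with
  | zero =>
    rw [loneHeadCount, card_fin_zero_letter_zero_eq_zero (by omega), headCount_zero (by omega)]
  | succ m =>
    obtain ⟨k, rfl⟩ : ∃ k', k = k' + 1 := ⟨k - 1, by omega⟩
    obtain ⟨p, rfl⟩ : ∃ p : Fin k, d = p + 1 := ⟨⟨d - 1, by omega⟩, (Nat.sub_add_cancel hd).symm⟩
    have hhead (u : Fin m → Fin k) :
        letter (p.castSucc.succAbove ∘ u) 0 < p + 1 ↔ letter u 0 < p + 1 := by
      rcases Nat.eq_zero_or_pos m with rfl | hm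
      · simp [letter_of_le]
      · have := Fin.succAbove_lt_iff_castSucc_lt p.castSucc (u ⟨0, hm⟩)
        rw [letter_of_lt _ hm, letter_of_lt _ hm, Function.comp_apply]
        simp only [Fin.lt_def, Fin.val_castSucc] at this
        omega
    conv_lhs => rw [loneHeadCount, ← Fin.val_castSucc p, card_letter_zero_eq_card_cons]
    simp only [avoids21d1_cons_iff, headRecurs_cons_iff]
    rw [card_castSucc_notMem_range_eq_card_comp_succAbove, Nat.add_sub_cancel,
      headCount_succ (by omega) (by omega)]
    refine Nat.card_congr (Equiv.subtypeEquivRight fun u => ?_)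
    rw [avoids21d1_comp_iff (Fin.strictMono_succAbove _),
      headRecurs_comp_iff Fin.succAbove_right_injective, Fin.val_castSucc, hhead]

lemma headCount_succ_succ (hd : 1 ≤ d) (hdk : d + 1 ≤ k) :
    (headCount (m + 1) k (d + 1) : ℤ) =
      headCount (m + 1) k d - headCount m k d + headCount m (k - 1) d := by
  have := headCount_succ_add_headCount (m := m) hd hdk
  rw [loneHeadCount_eq_headCount hd (by omega)] at this
  omega

end Counting

section Shifts

def lengthShift : Module.End ℤ (ℤ → ℕ → ℤ) where
  toFun ψ n k := ψ (n - 1) k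
  map_add' _ _ := rfl
  map_smul' _ _ := rfl

def alphabetShift : Module.End ℤ (ℤ → ℕ → ℤ) where
  toFun ψ n k := ψ n (k - 1)
  map_add' _ _ := rfl
  map_smul' _ _ := rfl

lemma commute_lengthShift_alphabetShift : Commute lengthShift alphabetShift :=
  LinearMap.ext fun _ => rfl

lemma lengthShift_pow_apply (a : ℕ) (ψ : ℤ → ℕ → ℤ) (n : ℤ) (k : ℕ) :
    (lengthShift ^ a) ψ n k = ψ (n - a) k := by
  induction a generalizing n with
  | zero => simp
  | succ a ih =>
    rw [pow_succ', Module.End.mul_apply]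
    change (lengthShift ^ a) ψ (n - 1) k = _
    rw [ih]
    push_cast
    ring_nf

lemma neg_lengthShift_pow_apply (a : ℕ) (ψ : ℤ → ℕ → ℤ) (n : ℤ) (k : ℕ) :
    ((-lengthShift) ^ a) ψ n k = (-1) ^ a * ψ (n - a) k := by
  rw [← neg_one_smul ℤ lengthShift, smul_pow, LinearMap.smul_apply, Pi.smul_apply, Pi.smul_apply,
    smul_eq_mul, lengthShift_pow_apply]

lemma alphabetShift_pow_apply (b : ℕ) (ψ : ℤ → ℕ → ℤ) (n : ℤ) (k : ℕ) :
    (alphabetShift ^ b) ψ n k = ψ n (k - b) := by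
  induction b generalizing k with
  | zero => simp
  | succ b ih =>
    rw [pow_succ', Module.End.mul_apply]
    change (alphabetShift ^ b) ψ n (k - 1) = _
    rw [ih, Nat.sub_sub, add_comm]

def headStep : Module.End ℤ (ℤ → ℕ → ℤ) := lengthShift * alphabetShift + (1 - lengthShift)

lemma headStep_apply (ψ : ℤ → ℕ → ℤ) (n : ℤ) (k : ℕ) :
    headStep ψ n k = ψ n k - ψ (n - 1) k + ψ (n - 1) (k - 1) := by
  change ψ (n - 1) (k - 1) + (ψ n k - ψ (n - 1) k) = _
  ring

lemma headStep_pow_apply_of_neg {ψ : ℤ → ℕ → ℤ} (hψ : ∀ n < 0, ∀ k, ψ n k = 0) (c : ℕ) :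
    ∀ n < 0, ∀ k, (headStep ^ c) ψ n k = 0 := by
  induction c with
  | zero => simpa using hψ
  | succ c ih =>
    intro n hn k
    rw [pow_succ', Module.End.mul_apply, headStep_apply, ih n hn, ih (n - 1) (by omega),
      ih (n - 1) (by omega)]
    ring

lemma one_sub_lengthShift_pow_apply (r : ℕ) (ψ : ℤ → ℕ → ℤ) (n : ℤ) (k : ℕ) :
    ((1 - lengthShift) ^ r) ψ n k =
      ∑ i ∈ range (r + 1), (r.choose i : ℤ) * (-1) ^ i * ψ (n - i) k := by
  rw [sub_eq_neg_add, (Commute.one_right _).add_pow, LinearMap.sum_apply, Finset.sum_apply,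
    Finset.sum_apply]
  refine sum_congr rfl fun i _ => ?_
  rw [one_pow, mul_one, Module.End.mul_apply, Module.End.natCast_apply, map_nsmul, Pi.smul_apply,
    Pi.smul_apply, nsmul_eq_mul, neg_lengthShift_pow_apply, mul_assoc]

lemma lengthShift_mul_alphabetShift_pow_apply (j : ℕ) (ψ : ℤ → ℕ → ℤ) (n : ℤ) (k : ℕ) :
    ((lengthShift * alphabetShift) ^ j) ψ n k = ψ (n - j) (k - j) := by
  rw [commute_lengthShift_alphabetShift.mul_pow, Module.End.mul_apply, lengthShift_pow_apply,
    alphabetShift_pow_apply]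

theorem headStep_pow_apply (c : ℕ) (ψ : ℤ → ℕ → ℤ) (n : ℤ) (k : ℕ) :
    (headStep ^ c) ψ n k = ∑ j ∈ range (c + 1), (c.choose j : ℤ) *
      ∑ i ∈ range (c - j + 1), ((c - j).choose i : ℤ) * (-1) ^ i * ψ (n - i - j) (k - j) := by
  have hcomm : Commute (lengthShift * alphabetShift) (1 - lengthShift) :=
    (Commute.one_right _).sub_right
      ((Commute.refl _).mul_left commute_lengthShift_alphabetShift.symm)
  rw [headStep, hcomm.add_pow, LinearMap.sum_apply, Finset.sum_apply, Finset.sum_apply]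
  refine sum_congr rfl fun j _ => ?_
  rw [Module.End.mul_apply, Module.End.natCast_apply, map_nsmul, Pi.smul_apply, Pi.smul_apply,
    nsmul_eq_mul, Module.End.mul_apply, lengthShift_mul_alphabetShift_pow_apply,
    one_sub_lengthShift_pow_apply]
  simp only [sub_right_comm _ (j : ℤ)]

end Shifts

theorem headCount_eq_headStep_pow_f (c : ℕ) :
    ∀ n k, c + 1 ≤ k → (headCount n k (c + 1) : ℤ) = (headStep ^ c) f (n - 1) k := by
  induction c with
  | zero =>
    rintro (_ | n) k hk
    · simp [headCount_zero, f_of_neg]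
    · simp [headCount_succ_one hk, f_natCast]
  | succ c ih =>
    rintro (_ | n) k hk
    · simp [headCount_zero, headStep_pow_apply_of_neg fun _ hn k => f_of_neg hn k]
    · rw [headCount_succ_succ (by omega) hk, ih _ _ (by omega), ih _ _ (by omega),
        ih _ _ (by omega), pow_succ', Module.End.mul_apply, headStep_apply]
      push_cast
      ring_nf

theorem stmt8_general (n k : ℕ) (hn : 1 ≤ n) :
    f (n : ℤ) k = ∑ d ∈ Finset.Icc 1 k, ∑ j ∈ Finset.range d,
      ((d - 1).choose j : ℤ) * ∑ i ∈ Finset.range (d - j),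
        ((d - 1 - j).choose i : ℤ) * (-1) ^ i * f ((n : ℤ) - 1 - i - j) (k - j) := by
  obtain ⟨m, rfl⟩ := Nat.exists_eq_add_of_le' hn
  rw [f_natCast, card_avoids21d1_eq_sum_headCount, Nat.cast_sum]
  refine sum_congr rfl fun d hd => ?_
  obtain ⟨c, rfl⟩ := Nat.exists_eq_add_of_le' (mem_Icc.mp hd).1
  rw [headCount_eq_headStep_pow_f c _ _ (mem_Icc.mp hd).2, headStep_pow_apply, Nat.add_sub_cancel]
  refine sum_congr rfl fun j hj => ?_
  rw [Nat.sub_add_comm (mem_range_succ_iff.mp hj)]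

theorem stmt8 (n k : ℕ) (hn : 1 ≤ n) (hk : 1 ≤ k) :
    f (n : ℤ) k = ∑ d ∈ Finset.Icc 1 k, ∑ j ∈ Finset.range d,
      ((d - 1).choose j : ℤ) * ∑ i ∈ Finset.range (d - j),
        ((d - 1 - j).choose i : ℤ) * (-1) ^ i * f ((n : ℤ) - 1 - i - j) (k - j) :=
  stmt8_general n k hn
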